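/- arXiv:2306.10752 — 4 statements merged into one kernel-verified Lean document; each statement's English description precedes it below -/
import Mathlib

section
/- Let g : ℝ^M → ℝ be concave, nondecreasing (componentwise), and suppose sup_{α ∈ ℝ^M} g(α) > 0. Then inf { Σ_{m=1}^M α^m : α ∈ ℝ^M, g(α) > 0 } = inf { Σ_{m=1}^M α^m : α ∈ ℝ^M, g(α) ≥ 0 }. -/
/-!
If `g x ≥ 0` and `g y > 0`, concavity makes `g` strictly positive on the half-open segment
`(x, y]`, so every point of the weak acceptance set `{g ≥ 0}` is a limit of points of the strict
one along which an affine objective converges.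
-/

open Set Filter Topology

lemma ConcaveOn.pos_lineMap {E : Type*} [AddCommGroup E] [Module ℝ E] {g : E → ℝ}
    (hg : ConcaveOn ℝ univ g) {x y : E} (hx : 0 ≤ g x) (hy : 0 < g y) {t : ℝ}
    (ht₀ : 0 < t) (ht₁ : t ≤ 1) : 0 < g (AffineMap.lineMap x y t) := by
  have hconc : (1 - t) • g x + t • g y ≤ g ((1 - t) • x + t • y) :=
    hg.2 (mem_univ x) (mem_univ y) (by linarith) ht₀.le (by ring)
  rw [AffineMap.lineMap_apply_module]
  simp only [smul_eq_mul] at hconc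
  nlinarith

lemma ConcaveOn.sInf_image_pos_eq_sInf_image_nonneg {E : Type*} [AddCommGroup E] [Module ℝ E]
    {g : E → ℝ} (hg : ConcaveOn ℝ univ g) {y : E} (hy : 0 < g y) (f : E →ᵃ[ℝ] ℝ) :
    sInf ((fun x => (f x : EReal)) '' {x | 0 < g x})
      = sInf ((fun x => (f x : EReal)) '' {x | 0 ≤ g x}) := by
  refine le_antisymm (le_sInf ?_) (sInf_le_sInf (image_mono fun x (hx : 0 < g x) => hx.le))
  rintro _ ⟨x, hx, rfl⟩
  have hlim : Tendsto (fun t : ℝ => (f (AffineMap.lineMap x y t) : EReal)) (𝓝[>] 0) (𝓝 (f x)) := by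
    simp only [AffineMap.apply_lineMap]
    have hcont := (continuous_coe_real_ereal.comp
      (AffineMap.lineMap_continuous (p := f x) (q := f y) (R := ℝ))).tendsto (0 : ℝ)
    simpa [Function.comp_def] using hcont.mono_left nhdsWithin_le_nhds
  refine ge_of_tendsto hlim ?_
  filter_upwards [Ioc_mem_nhdsGT zero_lt_one] with t ⟨ht₀, ht₁⟩
  exact sInf_le ⟨_, hg.pos_lineMap hx hy ht₀ ht₁, rfl⟩

theorem stmt9_general (M : ℕ) (g : (Fin M → ℝ) → ℝ)
    (hg : ConcaveOn ℝ Set.univ g)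
    (hsup : (0 : EReal) < ⨆ α : Fin M → ℝ, (g α : EReal)) :
    sInf ((fun α : Fin M → ℝ => ((∑ m, α m : ℝ) : EReal)) '' {α | 0 < g α})
      = sInf ((fun α : Fin M → ℝ => ((∑ m, α m : ℝ) : EReal)) '' {α | 0 ≤ g α}) := by
  obtain ⟨α₀, hα₀⟩ := lt_iSup_iff.mp hsup
  simpa using hg.sInf_image_pos_eq_sInf_image_nonneg (EReal.coe_pos.mp hα₀)
    (∑ m, LinearMap.proj m : (Fin M → ℝ) →ₗ[ℝ] ℝ).toAffineMap

theorem stmt9 (M : ℕ) (hM : 0 < M) (g : (Fin M → ℝ) → ℝ)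
    (hg : ConcaveOn ℝ Set.univ g) (hmono : Monotone g)
    (hsup : (0 : EReal) < ⨆ α : Fin M → ℝ, (g α : EReal)) :
    sInf ((fun α : Fin M → ℝ => ((∑ m, α m : ℝ) : EReal)) '' {α | 0 < g α})
      = sInf ((fun α : Fin M → ℝ => ((∑ m, α m : ℝ) : EReal)) '' {α | 0 ≤ g α}) :=
  stmt9_general M g hg hsup
end

section
/- Let U : ℝ^N → ℝ be strictly concave, strictly increasing componentwise, continuous, and suppose there exist constants a > 0 and b ∈ ℝ with U(x) ≤ a Σⱼ (xⱼ)⁺ − 2a Σⱼ (xⱼ)⁻ + b for all x ∈ ℝ^N. Let π : ℝ^N → ℝ^M be linear with Σ_{m=1}^M π^m(x) = Σ_{j=1}^N xⱼ for all x, and π(ℝ₊^N) = ℝ₊^M. Then for z = 0 ∈ ℝ^M, the supremum (□_π U)(0) = sup { U(x) : π(x) = 0 } is finite and attained by some x∞ ∈ ℝ^N with π(x∞) = 0 and U(x∞) = (□_π U)(0). -/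
/-!
On the hyperplane `∑ⱼ xⱼ = 0` the positive and negative parts of `x` have the same total mass `s`,
so the growth bound reads `U x ≤ b - a s`. Hence on the superlevel set `{U ≥ U 0}` of the kernel of
`π` (which lies in that hyperplane) the negative mass, and with it every coordinate, is at most
`(b - U 0) / a`. This superlevel set is therefore compact, and a maximiser of `U` on it maximises
`U` on the whole kernel.
-/

open Finset Set

section PositiveNegativeParts

variable {ι : Type*} [Fintype ι]

lemma sum_max_zero_eq_sum_max_neg_zero {x : ι → ℝ} (hx : ∑ j, x j = 0) :
    ∑ j, max (x j) 0 = ∑ j, max (-x j) 0 := by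
  have h : ∑ j, (max (x j) 0 - max (-x j) 0) = ∑ j, x j :=
    sum_congr rfl fun j _ => max_zero_sub_eq_self (x j)
  rw [sum_sub_distrib] at h
  linarith

lemma norm_le_sum_max_neg_zero {x : ι → ℝ} (hx : ∑ j, x j = 0) :
    ‖x‖ ≤ ∑ j, max (-x j) 0 := by
  have hpos : ∀ j, max (x j) 0 ≤ ∑ i, max (x i) 0 := fun j =>
    single_le_sum (f := fun i => max (x i) 0) (fun i _ => le_max_right _ _) (mem_univ j)
  have hneg : ∀ j, max (-x j) 0 ≤ ∑ i, max (-x i) 0 := fun j =>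
    single_le_sum (f := fun i => max (-x i) 0) (fun i _ => le_max_right _ _) (mem_univ j)
  refine pi_norm_le_iff_of_nonneg (sum_nonneg fun i _ => le_max_right _ _) |>.mpr fun j => ?_
  rw [Real.norm_eq_abs, abs_le]
  have := sum_max_zero_eq_sum_max_neg_zero hx
  constructor <;> linarith [le_max_left (x j) 0, le_max_left (-x j) 0, hpos j, hneg j]

lemma sum_max_neg_zero_le_of_le_growth_bound {x : ι → ℝ} (hx : ∑ j, x j = 0) {a b c : ℝ}
    (ha : 0 < a) (hc : c ≤ a * ∑ j, max (x j) 0 - 2 * a * ∑ j, max (-x j) 0 + b) :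
    ∑ j, max (-x j) 0 ≤ (b - c) / a := by
  rw [sum_max_zero_eq_sum_max_neg_zero hx] at hc
  rw [le_div_iff₀ ha]
  linarith

end PositiveNegativeParts

lemma IsClosed.exists_isMaxOn_of_isBounded_superlevel {α : Type*} [PseudoMetricSpace α]
    [ProperSpace α] {f : α → ℝ} (hf : Continuous f) {s : Set α} (hs : IsClosed s) {x₀ : α}
    (hx₀ : x₀ ∈ s) (hbdd : Bornology.IsBounded {x | x ∈ s ∧ f x₀ ≤ f x}) :
    ∃ x ∈ s, IsMaxOn f s x := by
  have hK : IsCompact {x | x ∈ s ∧ f x₀ ≤ f x} :=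
    Metric.isCompact_of_isClosed_isBounded
      (hs.inter (_root_.isClosed_le continuous_const hf)) hbdd
  obtain ⟨x, ⟨hxs, -⟩, hmax⟩ := hK.exists_isMaxOn ⟨x₀, hx₀, le_rfl⟩ hf.continuousOn
  refine ⟨x, hxs, fun y hy => ?_⟩
  rcases le_total (f x₀) (f y) with h | h
  · exact hmax ⟨hy, h⟩
  · exact h.trans (hmax ⟨hx₀, le_rfl⟩)

lemma IsMaxOn.sSup_image_coe_eReal_eq {α : Type*} {f : α → ℝ} {s : Set α} {x : α}
    (hx : x ∈ s) (hmax : IsMaxOn f s x) :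
    sSup ((fun y => (f y : EReal)) '' s) = f x :=
  IsGreatest.csSup_eq ⟨mem_image_of_mem _ hx, by
    rintro _ ⟨y, hy, rfl⟩
    exact EReal.coe_le_coe_iff.mpr (hmax hy)⟩

theorem stmt15_general (N M : ℕ)
    (U : (Fin N → ℝ) → ℝ)
    (hcont : Continuous U)
    (a b : ℝ) (ha : 0 < a)
    (hbound : ∀ x : Fin N → ℝ,
      U x ≤ a * ∑ j, max (x j) 0 - 2 * a * ∑ j, max (-(x j)) 0 + b)
    (π : (Fin N → ℝ) →ₗ[ℝ] (Fin M → ℝ))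
    (hsum : ∀ x, ∑ m, π x m = ∑ j, x j) :
    ∃ xinf : Fin N → ℝ, π xinf = 0 ∧
      sSup ((fun x => (U x : EReal)) '' {x | π x = 0}) = (U xinf : EReal) := by
  have hker : IsClosed {x : Fin N → ℝ | π x = 0} :=
    isClosed_singleton.preimage (LinearMap.continuous_of_finiteDimensional π)
  have hbdd : Bornology.IsBounded {x | π x = 0 ∧ U 0 ≤ U x} := by
    refine (Metric.isBounded_closedBall (x := 0) (r := (b - U 0) / a)).subset ?_
    rintro x ⟨hx, hUx⟩
    have hx_sum : ∑ j, x j = 0 := by simp [← hsum x, hx]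
    rw [Metric.mem_closedBall, dist_zero_right]
    exact (norm_le_sum_max_neg_zero hx_sum).trans
      (sum_max_neg_zero_le_of_le_growth_bound hx_sum ha (hUx.trans (hbound x)))
  obtain ⟨xinf, hxinf, hmax⟩ :=
    hker.exists_isMaxOn_of_isBounded_superlevel hcont (map_zero π) hbdd
  exact ⟨xinf, hxinf, hmax.sSup_image_coe_eReal_eq hxinf⟩

theorem stmt15 (N M : ℕ) (hN : 0 < N) (hM : 0 < M)
    (U : (Fin N → ℝ) → ℝ) (hconc : StrictConcaveOn ℝ Set.univ U)
    (hmono : StrictMono U) (hcont : Continuous U)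
    (a b : ℝ) (ha : 0 < a)
    (hbound : ∀ x : Fin N → ℝ,
      U x ≤ a * ∑ j, max (x j) 0 - 2 * a * ∑ j, max (-(x j)) 0 + b)
    (π : (Fin N → ℝ) →ₗ[ℝ] (Fin M → ℝ))
    (hsum : ∀ x, ∑ m, π x m = ∑ j, x j)
    (hπ : π '' {x | 0 ≤ x} = {z | 0 ≤ z}) :
    ∃ xinf : Fin N → ℝ, π xinf = 0 ∧
      sSup ((fun x => (U x : EReal)) '' {x | π x = 0}) = (U xinf : EReal) :=
  stmt15_general N M U hcont a b ha hbound π hsum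
end

section
/- Let f : ℝ^N → ℝ be strictly convex, differentiable, and A ∈ ℝ^{M×N} surjective. Suppose that for some ŷ ∈ ℝ^M the problem inf { f(x) : Ax = ŷ } admits an optimum x̂ with ∇f(x̂) = Aᵀλ̂ for some λ̂ ∈ ℝ^M, and suppose ∇f(ℝ^N) is open with Aᵀλ̂ ∈ ∇f(ℝ^N) ⊆ ri(dom f*). Then for every y ∈ ℝ^M the problem inf { f(x) : Ax = y } admits an optimum. -/
/-!
An optimum exists on the fibre `{x | A x = y}` as soon as the sublevel set of `f` there is
bounded. If it were not, being closed and convex it would contain a ray `{x₀ + t • d | t ≥ 0}` with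
`d ≠ 0`, `A d = 0`, along which `f` stays bounded above; by the gradient inequality every
directional derivative `⟨∇f z, d⟩` is then `≤ 0`. But `∇f(ℝᴺ)` is open and contains `Aᵀλ̂`,
so it contains `Aᵀλ̂ + c d` for small `c > 0`, whose pairing with `d` is `c ‖d‖² > 0`.
-/

open Filter Topology Set

section Convex

variable {E : Type*} [NormedAddCommGroup E] [NormedSpace ℝ E] {f : E → ℝ}

theorem ConvexOn.add_fderiv_sub_le (hf : ConvexOn ℝ univ f) {f' : E →L[ℝ] ℝ} {z : E}
    (hz : HasFDerivAt f f' z) (x : E) : f z + f' (x - z) ≤ f x := by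
  set ℓ : ℝ →ᵃ[ℝ] E := AffineMap.lineMap z x
  have hderiv : HasDerivAt (f ∘ ℓ) (f' (x - z)) 0 := by
    have hz' : HasFDerivAt f f' (ℓ 0) := by simpa [ℓ] using hz
    exact hz'.comp_hasDerivAt 0 AffineMap.hasDerivAt_lineMap
  have := (hf.comp_affineMap ℓ).le_slope_of_hasDerivAt (mem_univ 0) (mem_univ 1) one_pos hderiv
  simp only [slope_def_field, Function.comp_apply, ℓ, AffineMap.lineMap_apply_zero,
    AffineMap.lineMap_apply_one, sub_zero, div_one] at this
  linarith

theorem ConvexOn.fderiv_apply_nonpos_of_le_on_ray (hf : ConvexOn ℝ univ f) {f' : E →L[ℝ] ℝ}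
    {z : E} (hz : HasFDerivAt f f' z) {x₀ d : E} {C : ℝ}
    (hray : ∀ t : ℝ, 0 ≤ t → f (x₀ + t • d) ≤ C) :
    f' d ≤ 0 := by
  by_contra! hpos
  have htend : Tendsto (fun t : ℝ => f z + f' (x₀ - z) + t * f' d) atTop atTop :=
    tendsto_atTop_add_const_left _ _ (tendsto_id.atTop_mul_const hpos)
  obtain ⟨t, hCt, ht⟩ := ((htend.eventually_gt_atTop C).and (eventually_ge_atTop 0)).exists
  have := hf.add_fderiv_sub_le hz (x₀ + t • d)
  rw [show x₀ + t • d - z = (x₀ - z) + t • d by abel, map_add, map_smul, smul_eq_mul] at this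
  linarith [hray t ht]

theorem Convex.exists_ray_subset_of_not_isBounded [FiniteDimensional ℝ E] {K : Set E}
    (hK : Convex ℝ K) (hKc : IsClosed K) (hKb : ¬ Bornology.IsBounded K) {x₀ : E} (hx₀ : x₀ ∈ K) :
    ∃ d : E, d ≠ 0 ∧ ∀ t : ℝ, 0 ≤ t → x₀ + t • d ∈ K := by
  have hfar : ∀ n : ℕ, ∃ u ∈ K, (n : ℝ) < ‖u - x₀‖ := by
    intro n
    by_contra! h
    exact hKb ((Metric.isBounded_closedBall (x := x₀) (r := n)).subset fun u hu => by
      simpa [dist_eq_norm] using h u hu)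
  choose u huK hun using hfar
  set r : ℕ → ℝ := fun n => ‖u n - x₀‖
  have hr : ∀ n, 0 < r n := fun n => (Nat.cast_nonneg n).trans_lt (hun n)
  obtain ⟨d, hd, φ, hφ, hlim⟩ := (isCompact_sphere (0 : E) 1).tendsto_subseq
    (x := fun n => (r n)⁻¹ • (u n - x₀)) fun n => by
      simp [norm_smul, r, (hr n).ne']
  refine ⟨d, ne_zero_of_mem_unit_sphere ⟨d, hd⟩, fun t ht => ?_⟩
  refine hKc.mem_of_tendsto ((hlim.const_smul t).const_add x₀) ?_
  filter_upwards [eventually_ge_atTop ⌈t⌉₊] with k hk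
  have htr : t ≤ r (φ k) := calc
    t ≤ ⌈t⌉₊ := Nat.le_ceil t
    _ ≤ φ k := by exact_mod_cast hk.trans hφ.le_apply
    _ ≤ r (φ k) := (hun _).le
  simpa [smul_smul, div_eq_mul_inv] using hK.add_smul_sub_mem hx₀ (huK (φ k))
    ⟨by positivity, (div_le_one (hr _)).2 htr⟩

theorem ConvexOn.isBounded_sublevel_inter_fiber [FiniteDimensional ℝ E] {F : Type*}
    [NormedAddCommGroup F] [NormedSpace ℝ F] {f' : E → E →L[ℝ] ℝ} (hf : ConvexOn ℝ univ f)
    (hf' : ∀ x, HasFDerivAt f (f' x) x) (L : E →ₗ[ℝ] F)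
    (hker : ∀ d, L d = 0 → d ≠ 0 → ∃ z, 0 < f' z d) (x₀ : E) :
    Bornology.IsBounded {x ∈ {x | L x = L x₀} | f x ≤ f x₀} := by
  by_contra hKb
  have hfc : Continuous f := continuous_iff_continuousAt.2 fun x => (hf' x).continuousAt
  have hKconv : Convex ℝ {x ∈ {x | L x = L x₀} | f x ≤ f x₀} :=
    (hf.subset (subset_univ _) ((convex_singleton (L x₀)).linear_preimage L)).convex_le _
  have hKc : IsClosed {x ∈ {x | L x = L x₀} | f x ≤ f x₀} :=
    (isClosed_eq L.continuous_of_finiteDimensional continuous_const).inter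
      (isClosed_le hfc continuous_const)
  obtain ⟨d, hd0, hray⟩ := hKconv.exists_ray_subset_of_not_isBounded hKc hKb ⟨rfl, le_rfl⟩
  have hLd : L d = 0 := by simpa using (hray 1 zero_le_one).1
  obtain ⟨z, hz⟩ := hker d hLd hd0
  exact hz.not_ge (hf.fderiv_apply_nonpos_of_le_on_ray (hf' z) fun t ht => (hray t ht).2)

end Convex

theorem ContinuousOn.exists_isMinOn_of_isBounded {α β : Type*} [LinearOrder α]
    [TopologicalSpace α] [ClosedIicTopology α] [PseudoMetricSpace β] [ProperSpace β]
    {s : Set β} {f : β → α} (hf : ContinuousOn f s) (hs : IsClosed s) {x₀ : β} (hx₀ : x₀ ∈ s)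
    (hbdd : Bornology.IsBounded {x ∈ s | f x ≤ f x₀}) : ∃ x ∈ s, IsMinOn f s x := by
  refine hf.exists_isMinOn' hs hx₀ ?_
  filter_upwards [mem_inf_of_left hbdd.isCompact_closure.compl_mem_cocompact,
    mem_inf_of_right (mem_principal_self s)] with x hx hxs
  by_contra! hlt
  exact hx (subset_closure ⟨hxs, hlt.le⟩)

open Matrix in
theorem Matrix.exists_dotProduct_pos_of_isOpen_range {X m n : Type*} [Fintype m] [Fintype n]
    {G : X → n → ℝ} (A : Matrix m n ℝ) {x₀ : X} {lam : m → ℝ} (hlag : G x₀ = Aᵀ *ᵥ lam)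
    (hopen : IsOpen (range G)) {d : n → ℝ} (hd : A *ᵥ d = 0) (hd0 : d ≠ 0) :
    ∃ z, 0 < G z ⬝ᵥ d := by
  have hnhds : ∀ᶠ c : ℝ in 𝓝 0, G x₀ + c • d ∈ range G :=
    (hopen.preimage (by fun_prop)).mem_nhds (by simp)
  obtain ⟨c, ⟨z, hz⟩, hc⟩ :=
    ((hnhds.filter_mono nhdsWithin_le_nhds).and (self_mem_nhdsWithin (s := Ioi 0))).exists
  have hdd : 0 < d ⬝ᵥ d := by simpa using dotProduct_star_self_pos_iff.mpr hd0
  refine ⟨z, ?_⟩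
  rw [hz, add_dotProduct, hlag, mulVec_transpose, ← dotProduct_mulVec, hd, dotProduct_zero,
    smul_dotProduct, zero_add, smul_eq_mul]
  exact mul_pos hc hdd

theorem stmt16_general (N M : ℕ)
    (f : (Fin N → ℝ) → ℝ) (hf : StrictConvexOn ℝ Set.univ f)
    (G : (Fin N → ℝ) → (Fin N → ℝ))
    (hG : ∀ x, HasFDerivAt f
      (∑ i, G x i • (ContinuousLinearMap.proj i : (Fin N → ℝ) →L[ℝ] ℝ)) x)
    (A : Matrix (Fin M) (Fin N) ℝ) (hA : Function.Surjective A.mulVec)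
    (xhat : Fin N → ℝ) (lam : Fin M → ℝ)
    (hlag : G xhat = A.transpose.mulVec lam)
    (hopen : IsOpen (Set.range G)) :
    ∀ y : Fin M → ℝ, ∃ x : Fin N → ℝ, A.mulVec x = y ∧
      ∀ x', A.mulVec x' = y → f x ≤ f x' := by
  intro y
  obtain ⟨x₀, rfl⟩ := hA y
  have hfc : Continuous f := continuous_iff_continuousAt.2 fun x => (hG x).continuousAt
  have hbdd := hf.convexOn.isBounded_sublevel_inter_fiber hG A.mulVecLin
    (fun d hd hd0 => by
      obtain ⟨z, hz⟩ := A.exists_dotProduct_pos_of_isOpen_range hlag hopen hd hd0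
      exact ⟨z, by simpa [dotProduct] using hz⟩) x₀
  obtain ⟨x, hx, hmin⟩ := hfc.continuousOn.exists_isMinOn_of_isBounded
    (isClosed_eq A.mulVecLin.continuous_of_finiteDimensional continuous_const) rfl hbdd
  exact ⟨x, hx, fun x' hx' => hmin hx'⟩

theorem stmt16 (N M : ℕ) (hN : 0 < N) (hM : 0 < M)
    (f : (Fin N → ℝ) → ℝ) (hf : StrictConvexOn ℝ Set.univ f)
    (G : (Fin N → ℝ) → (Fin N → ℝ))
    (hG : ∀ x, HasFDerivAt f
      (∑ i, G x i • (ContinuousLinearMap.proj i : (Fin N → ℝ) →L[ℝ] ℝ)) x)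
    (A : Matrix (Fin M) (Fin N) ℝ) (hA : Function.Surjective A.mulVec)
    (yhat : Fin M → ℝ) (xhat : Fin N → ℝ) (lam : Fin M → ℝ)
    (hfeas : A.mulVec xhat = yhat)
    (hopt : ∀ x, A.mulVec x = yhat → f xhat ≤ f x)
    (hlag : G xhat = A.transpose.mulVec lam)
    (hopen : IsOpen (Set.range G))
    (hsub : Set.range G ⊆ intrinsicInterior ℝ
      {w : Fin N → ℝ | (⨆ x : Fin N → ℝ, (((∑ i, x i * w i) - f x : ℝ) : EReal)) < ⊤}) :
    ∀ y : Fin M → ℝ, ∃ x : Fin N → ℝ, A.mulVec x = y ∧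
      ∀ x', A.mulVec x' = y → f x ≤ f x' :=
  stmt16_general N M f hf G hG A hA xhat lam hlag hopen
end

section
/- Let U : ℝ^N → ℝ be concave and, for every x ∈ ℝ^N, strictly increasing in at least one component (i.e. there exists j with t ↦ U(x + t eⱼ) strictly increasing). Let π : ℝ^N → ℝ^M be linear with π(ℝ₊^N) = ℝ₊^M, and let X ∈ ℝ^N. Then inf { Σ_m π^m(y) : y ∈ ℝ^N, U(X + y) ≥ 0 } = inf { Σ_m π^m(y) : y ∈ ℝ^N, U(X + y) > 0 }. -/
/-!
Every `y` with `U (X + y) ≥ 0` is the limit, as `t → 0⁺`, of the points `y + t • eⱼ`, which satisfy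
`U (X + y + t • eⱼ) > U (X + y) ≥ 0` because `U` is strictly increasing along `eⱼ` at `X + y`.
The cost `y ↦ ∑ₘ πᵐ(y)` is continuous, so its infimum over the strict constraint set is also
at most the cost of `y`.
-/

open Filter Set Topology

theorem sInf_image_le_of_mem_closure {α β : Type*} [TopologicalSpace α] [CompleteLinearOrder β]
    [TopologicalSpace β] [ClosedIciTopology β] {f : α → β} (hf : Continuous f) {s : Set α} {y : α}
    (hy : y ∈ closure s) : sInf (f '' s) ≤ f y :=
  closure_minimal (fun _ hx => sInf_le (mem_image_of_mem f hx)) (isClosed_Ici.preimage hf) hy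

theorem mem_closure_setOf_pos_of_strictMono {E : Type*} [TopologicalSpace E] [AddCommGroup E]
    [Module ℝ E] [ContinuousAdd E] [ContinuousSMul ℝ E] {U : E → ℝ} {x y e : E}
    (hU : StrictMono fun t : ℝ => U (x + y + t • e)) (hy : 0 ≤ U (x + y)) :
    y ∈ closure {y | 0 < U (x + y)} := by
  have hlim : Tendsto (fun t : ℝ => y + t • e) (𝓝[>] 0) (𝓝 y) :=
    ((continuous_const.add (continuous_id.smul continuous_const)).tendsto' 0 y
      (by simp)).mono_left nhdsWithin_le_nhds
  refine mem_closure_of_tendsto hlim (eventually_nhdsWithin_of_forall fun t (ht : 0 < t) => ?_)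
  have hlt : U (x + y + (0 : ℝ) • e) < U (x + y + t • e) := hU ht
  rw [zero_smul, add_zero] at hlt
  simpa only [mem_ofPred_eq, add_assoc] using hy.trans_lt hlt

theorem stmt17_general (N M : ℕ)
    (U : (Fin N → ℝ) → ℝ)
    (hstr : ∀ x : Fin N → ℝ, ∃ j : Fin N,
      StrictMono fun t : ℝ => U (x + t • (Pi.single j (1 : ℝ) : Fin N → ℝ)))
    (π : (Fin N → ℝ) →ₗ[ℝ] (Fin M → ℝ))
    (X : Fin N → ℝ) :
    sInf ((fun y : Fin N → ℝ => ((∑ m, π y m : ℝ) : EReal)) '' {y | 0 ≤ U (X + y)})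
      = sInf ((fun y : Fin N → ℝ => ((∑ m, π y m : ℝ) : EReal)) '' {y | 0 < U (X + y)}) := by
  have hcost : Continuous fun y : Fin N → ℝ => ((∑ m, π y m : ℝ) : EReal) :=
    continuous_coe_real_ereal.comp <|
      continuous_finsetSum _ fun m _ => (continuous_apply m).comp π.continuous_of_finiteDimensional
  refine le_antisymm (sInf_le_sInf (image_mono fun y (hy : 0 < U (X + y)) => hy.le)) (le_sInf ?_)
  rintro _ ⟨y, hy, rfl⟩
  obtain ⟨j, hj⟩ := hstr (X + y)
  exact sInf_image_le_of_mem_closure hcost (mem_closure_setOf_pos_of_strictMono hj hy)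

theorem stmt17 (N M : ℕ) (hN : 0 < N) (hM : 0 < M)
    (U : (Fin N → ℝ) → ℝ) (hU : ConcaveOn ℝ Set.univ U)
    (hstr : ∀ x : Fin N → ℝ, ∃ j : Fin N,
      StrictMono fun t : ℝ => U (x + t • (Pi.single j (1 : ℝ) : Fin N → ℝ)))
    (π : (Fin N → ℝ) →ₗ[ℝ] (Fin M → ℝ))
    (hπ : π '' {x | 0 ≤ x} = {z | 0 ≤ z})
    (X : Fin N → ℝ) :
    sInf ((fun y : Fin N → ℝ => ((∑ m, π y m : ℝ) : EReal)) '' {y | 0 ≤ U (X + y)})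
      = sInf ((fun y : Fin N → ℝ => ((∑ m, π y m : ℝ) : EReal)) '' {y | 0 < U (X + y)}) :=
  stmt17_general N M U hstr π X
end
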